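/- With the Grover iteration number r = ⌊π/(4θ)⌋, the total squared amplitude of the state (U_S ∘ U_A)^r s on the indices outside A is at most k/n; that is, ∑_{i ∉ A} |((U_S ∘ U_A)^r s)_i|² ≤ k/n. -/

import Mathlib

open scoped BigOperators

/-!
In the plane spanned by the orthonormal vectors `t` (uniform on the unmarked indices) and `ã`
(uniform on `A`), the start vector `s` is the point at angle `θ`. On this circle `U_A` is the
reflection `α ↦ -α` and `U_S` the reflection `α ↦ 2θ - α`, so every Grover step rotates by `2θ`
and `(U_S U_A)^r s` is the point at angle `(2r+1)θ`. Its unmarked mass is `cos² ((2r+1)θ)`, and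
`r = ⌊π/(4θ)⌋` puts `(2r+1)θ` within `θ` of `π/2`, whence the bound `sin² θ = k/n`.
-/

open Finset Real

namespace Grover

section Rotation

variable {𝕜 E : Type*} [RCLike 𝕜] [NormedAddCommGroup E] [InnerProductSpace 𝕜 E]

variable (𝕜) in
noncomputable def stateAtAngle (t a : E) (α : ℝ) : E :=
  (cos α : 𝕜) • t + (sin α : 𝕜) • a

variable {t a : E}

theorem inner_stateAtAngle (ht : ‖t‖ = 1) (ha : ‖a‖ = 1) (hta : inner 𝕜 t a = 0) (α β : ℝ) :
    inner 𝕜 (stateAtAngle 𝕜 t a α) (stateAtAngle 𝕜 t a β) = (cos (α - β) : 𝕜) := by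
  have hat : inner 𝕜 a t = 0 := inner_eq_zero_symm.mp hta
  simp only [stateAtAngle, inner_add_left, inner_add_right, inner_smul_left, inner_smul_right,
    inner_self_eq_norm_sq_to_K, ht, ha, hta, hat, RCLike.conj_ofReal, cos_sub]
  push_cast
  ring

theorem two_inner_smul_stateAtAngle_sub (ht : ‖t‖ = 1) (ha : ‖a‖ = 1)
    (hta : inner 𝕜 t a = 0) (α β : ℝ) :
    (2 * inner 𝕜 (stateAtAngle 𝕜 t a α) (stateAtAngle 𝕜 t a β)) • stateAtAngle 𝕜 t a α
      - stateAtAngle 𝕜 t a β = stateAtAngle 𝕜 t a (2 * α - β) := by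
  have hcos : cos (2 * α - β) = 2 * cos (α - β) * cos α - cos β := by
    rw [cos_sub, cos_sub, cos_two_mul, sin_two_mul]; ring
  have hsin : sin (2 * α - β) = 2 * cos (α - β) * sin α - sin β := by
    rw [sin_sub, cos_sub, cos_two_mul, sin_two_mul]
    linear_combination (-2 * sin β) * sin_sq_add_cos_sq α
  rw [inner_stateAtAngle ht ha hta, stateAtAngle, stateAtAngle, stateAtAngle, hcos, hsin]
  push_cast
  module

theorem map_stateAtAngle_of_eigen {UA : Module.End 𝕜 E} (hUAt : UA t = t) (hUAa : UA a = -a)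
    (α : ℝ) : UA (stateAtAngle 𝕜 t a α) = stateAtAngle 𝕜 t a (-α) := by
  simp only [stateAtAngle, map_add, map_smul, hUAt, hUAa, cos_neg, sin_neg, RCLike.ofReal_neg,
    smul_neg, neg_smul]

theorem grover_pow_apply_stateAtAngle {UA US : Module.End 𝕜 E} {s : E} {θ : ℝ}
    (ht : ‖t‖ = 1) (ha : ‖a‖ = 1) (hta : inner 𝕜 t a = 0) (hs : s = stateAtAngle 𝕜 t a θ)
    (hUAt : UA t = t) (hUAa : UA a = -a) (hUS : ∀ v, US v = (2 * inner 𝕜 s v) • s - v)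
    (m : ℕ) : ((US * UA) ^ m) s = stateAtAngle 𝕜 t a ((2 * m + 1) * θ) := by
  induction m with
  | zero => simp [hs]
  | succ m ih =>
    rw [pow_succ', Module.End.mul_apply, ih, Module.End.mul_apply,
      map_stateAtAngle_of_eigen hUAt hUAa, hUS, hs, two_inner_smul_stateAtAngle_sub ht ha hta]
    push_cast
    ring_nf

end Rotation

section Uniform

variable {ι 𝕜 : Type*} [DecidableEq ι] [RCLike 𝕜]

variable (𝕜) in
noncomputable def uniformSuperposition (B : Finset ι) : EuclideanSpace 𝕜 ι :=
  ((√(#B : ℝ) : ℝ) : 𝕜)⁻¹ • ∑ i ∈ B, EuclideanSpace.single i 1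

theorem sum_single_one_apply (B : Finset ι) (j : ι) :
    (∑ i ∈ B, EuclideanSpace.single i (1 : 𝕜)) j = if j ∈ B then 1 else 0 := by
  rw [WithLp.ofLp_sum, Finset.sum_apply]
  simp

theorem uniformSuperposition_apply (B : Finset ι) (j : ι) :
    uniformSuperposition 𝕜 B j = if j ∈ B then ((√(#B : ℝ) : ℝ) : 𝕜)⁻¹ else 0 := by
  simp [uniformSuperposition, sum_single_one_apply]

theorem sqrt_card_smul_uniformSuperposition (B : Finset ι) :
    ((√(#B : ℝ) : ℝ) : 𝕜) • uniformSuperposition 𝕜 B =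
      ∑ i ∈ B, EuclideanSpace.single i 1 := by
  rcases B.eq_empty_or_nonempty with rfl | hB
  · simp
  · have : ((√(#B : ℝ) : ℝ) : 𝕜) ≠ 0 := by simpa using hB.card_pos.ne'
    rw [uniformSuperposition, smul_inv_smul₀ this]

theorem map_uniformSuperposition_of_eigen {f : Module.End 𝕜 (EuclideanSpace 𝕜 ι)}
    {B : Finset ι} {c : 𝕜}
    (h : ∀ i ∈ B, f (EuclideanSpace.single i 1) = c • EuclideanSpace.single i 1) :
    f (uniformSuperposition 𝕜 B) = c • uniformSuperposition 𝕜 B := by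
  rw [uniformSuperposition, map_smul, map_sum, sum_congr rfl h, ← smul_sum, smul_comm]

theorem sum_norm_sq_apply_add_of_disjoint {B C : Finset ι} (hB : B.Nonempty) (h : Disjoint B C)
    (x y : 𝕜) :
    ∑ i ∈ B, ‖(x • uniformSuperposition 𝕜 B + y • uniformSuperposition 𝕜 C) i‖ ^ 2 =
      ‖x‖ ^ 2 := by
  have hC : ∀ i ∈ B, i ∉ C := fun i hi => disjoint_left.mp h hi
  have : (0 : ℝ) < #B := by exact_mod_cast hB.card_pos
  rw [sum_congr rfl fun i hi => by
    rw [PiLp.add_apply, PiLp.smul_apply, PiLp.smul_apply, uniformSuperposition_apply,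
      uniformSuperposition_apply, if_pos hi, if_neg (hC i hi)]]
  simp only [smul_eq_mul, mul_zero, add_zero, norm_mul, norm_inv, RCLike.norm_ofReal, mul_pow,
    inv_pow, sq_abs, sq_sqrt this.le, sum_const, nsmul_eq_mul]
  field_simp

variable [Fintype ι]

theorem inner_sum_single_one (B C : Finset ι) :
    inner 𝕜 (∑ i ∈ B, EuclideanSpace.single i (1 : 𝕜)) (∑ j ∈ C, EuclideanSpace.single j 1)
      = #(B ∩ C) := by
  simp [sum_inner, EuclideanSpace.inner_single_left, sum_single_one_apply]

theorem norm_uniformSuperposition {B : Finset ι} (hB : B.Nonempty) :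
    ‖uniformSuperposition 𝕜 B‖ = 1 := by
  have hnorm : ‖∑ i ∈ B, EuclideanSpace.single i (1 : 𝕜)‖ = √(#B : ℝ) := by
    rw [norm_eq_sqrt_re_inner (𝕜 := 𝕜), inner_sum_single_one, inter_self]
    simp
  have : 0 < √(#B : ℝ) := by simpa using hB.card_pos
  rw [uniformSuperposition, norm_smul, hnorm, norm_inv, RCLike.norm_ofReal, abs_of_pos this,
    inv_mul_cancel₀ this.ne']

theorem inner_uniformSuperposition_of_disjoint {B C : Finset ι} (h : Disjoint B C) :
    inner 𝕜 (uniformSuperposition 𝕜 B) (uniformSuperposition 𝕜 C) = 0 := by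
  simp [uniformSuperposition, inner_smul_left, inner_smul_right, inner_sum_single_one,
    disjoint_iff_inter_eq_empty.mp h]

theorem uniformSuperposition_univ_eq (B : Finset ι) :
    uniformSuperposition 𝕜 (univ : Finset ι) =
      ((√(#Bᶜ / Fintype.card ι : ℝ) : ℝ) : 𝕜) • uniformSuperposition 𝕜 Bᶜ
        + ((√(#B / Fintype.card ι : ℝ) : ℝ) : 𝕜) • uniformSuperposition 𝕜 B := by
  rw [sqrt_div' _ (Nat.cast_nonneg _), sqrt_div' _ (Nat.cast_nonneg _), uniformSuperposition,
    ← sum_add_sum_compl B, ← sqrt_card_smul_uniformSuperposition,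
    ← sqrt_card_smul_uniformSuperposition, card_univ]
  simp only [div_eq_inv_mul, RCLike.ofReal_mul, RCLike.ofReal_inv, mul_smul, smul_add]
  abel

theorem uniformSuperposition_univ_eq_stateAtAngle {B : Finset ι} (hB : B.Nonempty) {θ : ℝ}
    (hθ₀ : -(π / 2) ≤ θ) (hθ₁ : θ ≤ π / 2) (hsin : sin θ = √(#B / Fintype.card ι)) :
    uniformSuperposition 𝕜 (univ : Finset ι) =
      stateAtAngle 𝕜 (uniformSuperposition 𝕜 Bᶜ) (uniformSuperposition 𝕜 B) θ := by
  have hcard : (0 : ℝ) < Fintype.card ι := by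
    exact_mod_cast hB.card_pos.trans_le (card_le_univ B)
  have hcos : cos θ = √(#Bᶜ / Fintype.card ι) := by
    rw [cos_eq_sqrt_one_sub_sin_sq hθ₀ hθ₁, hsin, sq_sqrt (by positivity), card_compl,
      Nat.cast_sub (card_le_univ B), sub_div, div_self hcard.ne']
  rw [stateAtAngle, hcos, hsin]
  exact uniformSuperposition_univ_eq B

theorem grover_pow_apply_uniformSuperposition {UA US : Module.End 𝕜 (EuclideanSpace 𝕜 ι)}
    {B : Finset ι} (hB : B.Nonempty) (hBc : Bᶜ.Nonempty) {θ : ℝ} (hθ₀ : -(π / 2) ≤ θ)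
    (hθ₁ : θ ≤ π / 2) (hsin : sin θ = √(#B / Fintype.card ι))
    (hUA : ∀ i, UA (EuclideanSpace.single i 1) =
      if i ∈ B then -EuclideanSpace.single i 1 else EuclideanSpace.single i 1)
    (hUS : ∀ v, US v = (2 * inner 𝕜 (uniformSuperposition 𝕜 univ) v) •
      uniformSuperposition 𝕜 univ - v) (m : ℕ) :
    ((US * UA) ^ m) (uniformSuperposition 𝕜 univ) =
      stateAtAngle 𝕜 (uniformSuperposition 𝕜 Bᶜ) (uniformSuperposition 𝕜 B)
        ((2 * m + 1) * θ) := by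
  have hUAc : UA (uniformSuperposition 𝕜 Bᶜ) = uniformSuperposition 𝕜 Bᶜ := by
    simpa using map_uniformSuperposition_of_eigen (f := UA) (B := Bᶜ) (c := 1) fun i hi => by
      rw [hUA, if_neg (mem_compl.mp hi), one_smul]
  have hUAB : UA (uniformSuperposition 𝕜 B) = -uniformSuperposition 𝕜 B := by
    simpa using map_uniformSuperposition_of_eigen (f := UA) (B := B) (c := -1) fun i hi => by
      rw [hUA, if_pos hi, neg_one_smul]
  exact grover_pow_apply_stateAtAngle (norm_uniformSuperposition hBc)
    (norm_uniformSuperposition hB) (inner_uniformSuperposition_of_disjoint disjoint_compl_left)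
    (uniformSuperposition_univ_eq_stateAtAngle hB hθ₀ hθ₁ hsin) hUAc hUAB hUS m

end Uniform

theorem abs_floor_grover_angle_sub_pi_div_two_le {θ : ℝ} (hθ : 0 < θ) :
    |(2 * ⌊π / (4 * θ)⌋₊ + 1) * θ - π / 2| ≤ θ := by
  have hle : (⌊π / (4 * θ)⌋₊ : ℝ) * θ ≤ π / 4 := by
    have := Nat.floor_le (div_pos pi_pos (by positivity : 0 < 4 * θ)).le
    rw [le_div_iff₀ (by positivity)] at this
    linarith
  have hlt : π / 4 < (⌊π / (4 * θ)⌋₊ + 1 : ℝ) * θ := by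
    have := Nat.lt_floor_add_one (π / (4 * θ))
    rw [div_lt_iff₀ (by positivity)] at this
    linarith
  rw [abs_le]
  constructor <;> linarith

theorem cos_sq_le_sin_sq_of_abs_sub_pi_div_two_le {β θ : ℝ} (hθ : θ ≤ π / 2)
    (h : |β - π / 2| ≤ θ) : cos β ^ 2 ≤ sin θ ^ 2 := by
  rw [abs_le] at h
  have hupper : sin (β - π / 2) ≤ sin θ :=
    sin_le_sin_of_le_of_le_pi_div_two (by linarith) hθ h.2
  have hlower : sin (-θ) ≤ sin (β - π / 2) :=
    sin_le_sin_of_le_of_le_pi_div_two (by linarith) (by linarith) h.1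
  rw [sin_neg] at hlower
  rw [sin_sub_pi_div_two] at hupper hlower
  exact sq_le_sq' (by linarith) (by linarith)

end Grover

open Grover

theorem grover_final_unmarked_mass_general
    (n : ℕ) (A : Finset (Fin n)) (k : ℕ) (hk : k = A.card)
    (hk0 : 0 < k) (hkn : k < n)
    (θ : ℝ) (hθ0 : 0 < θ) (hθ1 : θ < Real.pi / 2)
    (hsinθ : Real.sin θ = Real.sqrt ((k : ℝ) / (n : ℝ)))
    (s : EuclideanSpace ℂ (Fin n))
    (hs : s = ((Real.sqrt (n : ℝ) : ℝ) : ℂ)⁻¹ •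
      ∑ i : Fin n, EuclideanSpace.single i (1 : ℂ))
    (UA US : Module.End ℂ (EuclideanSpace ℂ (Fin n)))
    (hUA : ∀ i : Fin n, UA (EuclideanSpace.single i (1 : ℂ)) =
      if i ∈ A then -(EuclideanSpace.single i (1 : ℂ)) else EuclideanSpace.single i (1 : ℂ))
    (hUS : ∀ v : EuclideanSpace ℂ (Fin n), US v = (2 * (inner ℂ s v : ℂ)) • s - v)
    (r : ℕ) (hr : r = ⌊Real.pi / (4 * θ)⌋₊) :
    ∑ i ∈ Aᶜ, ‖(((US * UA) ^ r) s) i‖ ^ 2 ≤ (k : ℝ) / (n : ℝ) := by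
  subst hk hr
  have hA : A.Nonempty := card_pos.mp hk0
  have hAc : Aᶜ.Nonempty := by
    rw [← card_pos, card_compl, Fintype.card_fin]; omega
  have hsin : sin θ = √(#A / Fintype.card (Fin n)) := by rwa [Fintype.card_fin]
  obtain rfl : s = uniformSuperposition ℂ univ := by
    rw [hs, uniformSuperposition, card_univ, Fintype.card_fin]; rfl
  rw [grover_pow_apply_uniformSuperposition hA hAc (by linarith [pi_pos]) hθ1.le hsin hUA hUS,
    stateAtAngle, sum_norm_sq_apply_add_of_disjoint hAc disjoint_compl_left, RCLike.norm_ofReal,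
    sq_abs, ← sq_sqrt (div_nonneg (#A).cast_nonneg n.cast_nonneg), ← hsinθ]
  exact cos_sq_le_sin_sq_of_abs_sub_pi_div_two_le hθ1.le
    (abs_floor_grover_angle_sub_pi_div_two_le hθ0)

/-- With the Grover iteration number `r = ⌊π/(4θ)⌋`, the total squared amplitude of the
state `(U_S ∘ U_A)^r s` on the indices outside the marked set `A` is at most `k/n`. -/
theorem grover_final_unmarked_mass
    (n : ℕ) (hn : 1 ≤ n) (A : Finset (Fin n)) (k : ℕ) (hk : k = A.card)
    (hk0 : 0 < k) (hkn : k < n)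
    (θ : ℝ) (hθ0 : 0 < θ) (hθ1 : θ < Real.pi / 2)
    (hsinθ : Real.sin θ = Real.sqrt ((k : ℝ) / (n : ℝ)))
    (s a t : EuclideanSpace ℂ (Fin n))
    (hs : s = ((Real.sqrt (n : ℝ) : ℝ) : ℂ)⁻¹ •
      ∑ i : Fin n, EuclideanSpace.single i (1 : ℂ))
    (ha : a = ((Real.sqrt (k : ℝ) : ℝ) : ℂ)⁻¹ •
      ∑ i ∈ A, EuclideanSpace.single i (1 : ℂ))
    (ht : t = ((Real.sqrt ((n : ℝ) - (k : ℝ)) : ℝ) : ℂ)⁻¹ •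
      ∑ i ∈ Aᶜ, EuclideanSpace.single i (1 : ℂ))
    (UA US : Module.End ℂ (EuclideanSpace ℂ (Fin n)))
    (hUA : ∀ i : Fin n, UA (EuclideanSpace.single i (1 : ℂ)) =
      if i ∈ A then -(EuclideanSpace.single i (1 : ℂ)) else EuclideanSpace.single i (1 : ℂ))
    (hUS : ∀ v : EuclideanSpace ℂ (Fin n), US v = (2 * (inner ℂ s v : ℂ)) • s - v)
    (r : ℕ) (hr : r = ⌊Real.pi / (4 * θ)⌋₊) :
    ∑ i ∈ Aᶜ, ‖(((US * UA) ^ r) s) i‖ ^ 2 ≤ (k : ℝ) / (n : ℝ) :=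
  grover_final_unmarked_mass_general n A k hk hk0 hkn θ hθ0 hθ1 hsinθ s hs UA US hUA hUS r hr
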